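/- Let ℐ be a finite set and let 𝒪₊ = ℂ[X^{a,n}]_{(a,n)∈𝖠} in the variables indexed by 𝖠 ⊆ ℐ×ℤ. Define Dℓ ⊆ D̃er 𝒪₊ to be the set of formal sums Σ_{(a,n)∈𝖠} P^{a,n}(X) D_{a,n} such that for some K ≥ 1, each P^{a,n} is a ℂ-linear combination of the variables X^{b,m} with n − K ≤ m ≤ n + K, and define Dw ⊆ D̃er 𝒪₊ to be the elements of bounded grade with widening gap. Then Dw + Dℓ is closed under the Lie bracket of D̃er 𝒪₊, with [Dℓ, Dℓ] ⊆ Dℓ, [Dℓ, Dw] ⊆ Dw, and [Dw, Dw] ⊆ Dw; i.e. Dw ⋊ Dℓ is a Lie subalgebra. -/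

import Mathlib

open MvPolynomial

variable {ι : Type*}

/-- The bracket of two (formal, possibly infinite) vector fields
`Σ P^{a,n} D_{a,n}` and `Σ Q^{b,m} D_{b,m}`, computed coefficient-wise. -/
noncomputable def derBracket (P Q : ι × ℤ → MvPolynomial (ι × ℤ) ℂ) :
    ι × ℤ → MvPolynomial (ι × ℤ) ℂ :=
  fun an => ∑ᶠ bm : ι × ℤ,
    (P bm * MvPolynomial.pderiv bm (Q an) - Q bm * MvPolynomial.pderiv bm (P an))

/-- Membership in `Dℓ`: there is `K ≥ 1` such that each coefficient `P^{a,n}`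
(`(a,n) ∈ 𝖠`) is a ℂ-linear combination of the variables `X^{b,m}` with
`(b,m) ∈ 𝖠` and `n − K ≤ m ≤ n + K`. -/
def IsLin (A : Set (ι × ℤ)) (P : ι × ℤ → MvPolynomial (ι × ℤ) ℂ) : Prop :=
  ∃ K : ℤ, 1 ≤ K ∧ ∀ an ∈ A, P an ∈ Submodule.span ℂ
    {q : MvPolynomial (ι × ℤ) ℂ | ∃ bm ∈ A,
      an.2 - K ≤ bm.2 ∧ bm.2 ≤ an.2 + K ∧ q = MvPolynomial.X bm}

/-- Widening gap (relative to the index set `𝖠`). -/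
def WideningGap (A : Set (ι × ℤ)) (P : ι × ℤ → MvPolynomial (ι × ℤ) ℂ) : Prop :=
  ∀ K : ℤ, 1 ≤ K →
    {n : ℤ | ¬ ∀ a : ι, (a, n) ∈ A →
      P (a, n) ∈ MvPolynomial.supported ℂ {bm | bm ∈ A ∧ bm.2 < n - K}}.Finite

/-- Bounded grade: assigning `X^{b,m}` grade `−m` and `D_{a,n}` grade `n`, all
monomials of `P^{a,n} D_{a,n}` have grade in `[−M, M]` for a uniform `M`. -/
def BoundedGrade (A : Set (ι × ℤ)) (P : ι × ℤ → MvPolynomial (ι × ℤ) ℂ) : Prop :=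
  ∃ M : ℤ, ∀ an ∈ A, ∀ d ∈ (P an).support,
    |an.2 - ∑ bm ∈ d.support, (d bm : ℤ) * bm.2| ≤ M

/-- Membership in `Dw`: bounded grade and widening gap. -/
def IsDw (A : Set (ι × ℤ)) (P : ι × ℤ → MvPolynomial (ι × ℤ) ℂ) : Prop :=
  BoundedGrade A P ∧ WideningGap A P

/-
The bracket splits as `[P, Q] = P(Q) - Q(P)`, where `P(Q)^{a,n} = Σ P^{b,m} ∂_{b,m} Q^{a,n}`.
Differentiating by `X^{b,m}` raises the grade of a monomial by `m`, while `P^{b,m}` has grade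
close to `-m`, so grades of `P(Q)` stay within the sum of the two bounds. A linear field
differentiates to constants, so for linear `Q` the field `P(Q)` only substitutes the coefficients
`P^{b,m}` with `m` near `n`; this keeps both linearity in a window and the widening gap. If `Q`
has widening gap, then for all but finitely many `n` the coefficient `Q^{a,n}` only involves deep
variables `X^{b,m}`, `m < n - K'`, and `P` sends deep variables to deep polynomials for all but
finitely many `n`: by locality when `P` is linear, and when `P` has widening gap because the
finitely many exceptional coefficients (`ℐ` is finite) involve only finitely many variables.
-/

open Filter

namespace MvPolynomial

variable {σ R : Type*} [CommSemiring R] {p : MvPolynomial σ R} {i : σ} {s : Set σ}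

theorem add_single_mem_support_of_mem_support_pderiv {d : σ →₀ ℕ}
    (hd : d ∈ (pderiv i p).support) : d + Finsupp.single i 1 ∈ p.support := by
  rw [mem_support_iff, coeff_pderiv] at hd
  exact mem_support_iff.mpr (left_ne_zero_of_mul hd)

theorem vars_pderiv_subset : (pderiv i p).vars ⊆ p.vars := by
  intro j hj
  obtain ⟨d, hd, hj⟩ := (mem_vars_iff_mem_support j).mp hj
  refine (mem_vars_iff_mem_support j).mpr
    ⟨_, add_single_mem_support_of_mem_support_pderiv hd, ?_⟩
  rw [Finsupp.mem_support_iff] at hj ⊢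
  simp only [Finsupp.add_apply]
  omega

theorem pderiv_mem_supported (hp : p ∈ supported R s) (i : σ) : pderiv i p ∈ supported R s :=
  mem_supported.mpr ((Finset.coe_subset.mpr vars_pderiv_subset).trans (mem_supported.mp hp))

theorem pderiv_eq_zero_of_mem_supported (hp : p ∈ supported R s) (hi : i ∉ s) :
    pderiv i p = 0 :=
  pderiv_eq_zero_of_notMem_vars fun h => hi (mem_supported.mp hp h)

theorem support_mul_pderiv_finite (P : σ → MvPolynomial σ R) (p : MvPolynomial σ R) :
    (Function.support fun i => P i * pderiv i p).Finite :=
  p.vars.finite_toSet.subset fun i hi => by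
    by_contra h
    exact hi (by simp [pderiv_eq_zero_of_notMem_vars h])

theorem finsum_mul_pderiv_mem {S : Type*} [SetLike S (MvPolynomial σ R)]
    [AddSubmonoidClass S (MvPolynomial σ R)] {M : S} {P : σ → MvPolynomial σ R}
    (hp : p ∈ supported R s) (h : ∀ i ∈ s, P i * pderiv i p ∈ M) :
    ∑ᶠ i, P i * pderiv i p ∈ M :=
  finsum_induction (· ∈ M) (zero_mem M) (fun _ _ => add_mem) fun i => by
    by_cases hi : i ∈ s
    · exact h i hi
    · simp [pderiv_eq_zero_of_mem_supported hp hi, zero_mem M]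

theorem span_X_image_le_supported :
    Submodule.span R (X '' s) ≤ Subalgebra.toSubmodule (supported R s) :=
  Submodule.span_le.mpr Algebra.subset_adjoin

theorem span_X_image_le_restrictSupport :
    Submodule.span R (X '' s) ≤ restrictSupport R ((Finsupp.single · 1) '' s) :=
  Submodule.span_le.mpr <| Set.image_subset_iff.mpr fun i hi =>
    (monomial_mem_restrictSupport R).mpr (Or.inl ⟨i, hi, rfl⟩)

theorem exists_pderiv_eq_C_of_mem_span_X_image (hp : p ∈ Submodule.span R (X '' s)) (i : σ) :
    ∃ c : R, pderiv i p = C c := by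
  classical
  have hle : Submodule.span R (X '' s) ≤
      (Submodule.span R {(1 : MvPolynomial σ R)}).comap (pderiv i).toLinearMap := by
    refine Submodule.span_le.mpr <| Set.image_subset_iff.mpr fun j _ => ?_
    rcases eq_or_ne j i with rfl | hji
    · simp
    · simp [pderiv_X_of_ne hji]
  obtain ⟨c, hc⟩ := Submodule.mem_span_singleton.mp (hle hp)
  exact ⟨c, by rw [C_eq_smul_one, hc]; rfl⟩

theorem mul_pderiv_mem_of_mem_span_X_image {S : Type*} [SetLike S (MvPolynomial σ R)]
    [SMulMemClass S R (MvPolynomial σ R)] {M : S} {q : MvPolynomial σ R}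
    (hp : p ∈ Submodule.span R (X '' s)) (hq : q ∈ M) : q * pderiv i p ∈ M := by
  obtain ⟨c, hc⟩ := exists_pderiv_eq_C_of_mem_span_X_image hp i
  rw [hc, mul_comm, ← smul_eq_C_mul]
  exact SMulMemClass.smul_mem c hq

end MvPolynomial

noncomputable def derAct (P Q : ι × ℤ → MvPolynomial (ι × ℤ) ℂ) :
    ι × ℤ → MvPolynomial (ι × ℤ) ℂ :=
  fun an => ∑ᶠ bm, P bm * pderiv bm (Q an)

section Bracket

variable (P Q P₁ P₂ Q₁ Q₂ : ι × ℤ → MvPolynomial (ι × ℤ) ℂ)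

theorem derBracket_eq_sub : derBracket P Q = derAct P Q - derAct Q P :=
  funext fun _ => finsum_sub_distrib (support_mul_pderiv_finite _ _) (support_mul_pderiv_finite _ _)

theorem derAct_add_left : derAct (P₁ + P₂) Q = derAct P₁ Q + derAct P₂ Q := by
  funext an
  simp only [derAct, Pi.add_apply, add_mul]
  exact finsum_add_distrib (support_mul_pderiv_finite _ _) (support_mul_pderiv_finite _ _)

theorem derAct_add_right : derAct P (Q₁ + Q₂) = derAct P Q₁ + derAct P Q₂ := by
  funext an
  simp only [derAct, Pi.add_apply, map_add, mul_add]
  exact finsum_add_distrib (support_mul_pderiv_finite _ _) (support_mul_pderiv_finite _ _)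

theorem derBracket_add_left : derBracket (P₁ + P₂) Q = derBracket P₁ Q + derBracket P₂ Q := by
  simp only [derBracket_eq_sub, derAct_add_left, derAct_add_right]
  abel

theorem derBracket_add_right : derBracket P (Q₁ + Q₂) = derBracket P Q₁ + derBracket P Q₂ := by
  simp only [derBracket_eq_sub, derAct_add_left, derAct_add_right]
  abel

end Bracket

section Fields

variable {A : Set (ι × ℤ)} {P Q : ι × ℤ → MvPolynomial (ι × ℤ) ℂ}

def levelWindow (A : Set (ι × ℤ)) (n K : ℤ) : Set (ι × ℤ) :=
  {bm | bm ∈ A ∧ n - K ≤ bm.2 ∧ bm.2 ≤ n + K}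

theorem isLin_iff : IsLin A P ↔
    ∃ K, 1 ≤ K ∧ ∀ an ∈ A, P an ∈ Submodule.span ℂ (X '' levelWindow A an.2 K) := by
  have hset : ∀ (an : ι × ℤ) (K : ℤ), {q : MvPolynomial (ι × ℤ) ℂ | ∃ bm ∈ A,
      an.2 - K ≤ bm.2 ∧ bm.2 ≤ an.2 + K ∧ q = X bm} = X '' levelWindow A an.2 K := by
    intro an K
    ext q
    simp only [levelWindow, Set.mem_ofPred_eq, Set.mem_image, eq_comm (a := q), and_assoc]
  simp only [IsLin, hset]

theorem levelWindow_subset_levelWindow {n m K L : ℤ} (hm : m ∈ Set.Icc (n - L) (n + L)) :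
    levelWindow A m K ⊆ levelWindow A n (K + L) :=
  fun _ ⟨hA, h₁, h₂⟩ => ⟨hA, by linarith [hm.1], by linarith [hm.2]⟩

theorem IsLin.mem_supported (hP : IsLin A P) : ∀ an ∈ A, P an ∈ supported ℂ A := by
  obtain ⟨K, -, hK⟩ := isLin_iff.mp hP
  exact fun an han => supported_mono (fun _ h => h.1) (span_X_image_le_supported (hK an han))

theorem derAct_mem_span_levelWindow {K L : ℤ}
    (hP : ∀ an ∈ A, P an ∈ Submodule.span ℂ (X '' levelWindow A an.2 K))
    (hQ : ∀ an ∈ A, Q an ∈ Submodule.span ℂ (X '' levelWindow A an.2 L))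
    {an : ι × ℤ} (han : an ∈ A) :
    derAct P Q an ∈ Submodule.span ℂ (X '' levelWindow A an.2 (K + L)) :=
  finsum_mul_pderiv_mem (span_X_image_le_supported (hQ an han)) fun bm hbm =>
    mul_pderiv_mem_of_mem_span_X_image (hQ an han)
      (Submodule.span_mono (Set.image_mono (levelWindow_subset_levelWindow hbm.2)) (hP bm hbm.1))

theorem isLin_derBracket (hP : IsLin A P) (hQ : IsLin A Q) : IsLin A (derBracket P Q) := by
  obtain ⟨K, hK, hP⟩ := isLin_iff.mp hP
  obtain ⟨L, hL, hQ⟩ := isLin_iff.mp hQ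
  refine isLin_iff.mpr ⟨K + L, by omega, fun an han => ?_⟩
  rw [derBracket_eq_sub, Pi.sub_apply]
  refine sub_mem (derAct_mem_span_levelWindow hP hQ han) ?_
  rw [add_comm]
  exact derAct_mem_span_levelWindow hQ hP han

def gradeBand (n M : ℤ) : Set ((ι × ℤ) →₀ ℕ) :=
  {d | |n - Finsupp.weight Prod.snd d| ≤ M}

theorem boundedGrade_iff : BoundedGrade A P ↔
    ∃ M, ∀ an ∈ A, P an ∈ restrictSupport ℂ (gradeBand an.2 M) := by
  have hweight : ∀ d : (ι × ℤ) →₀ ℕ,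
      ∑ bm ∈ d.support, (d bm : ℤ) * bm.2 = Finsupp.weight Prod.snd d := fun d => by
    simp [Finsupp.weight_apply, Finsupp.sum]
  simp only [BoundedGrade, mem_restrictSupport_iff, Set.subset_def, Finset.mem_coe, gradeBand,
    Set.mem_ofPred_eq, hweight]

theorem mul_pderiv_mem_gradeBand {p q : MvPolynomial (ι × ℤ) ℂ} {bm : ι × ℤ} {n M N : ℤ}
    (hp : p ∈ restrictSupport ℂ (gradeBand bm.2 M))
    (hq : q ∈ restrictSupport ℂ (gradeBand n N)) :
    p * pderiv bm q ∈ restrictSupport ℂ (gradeBand n (M + N)) := by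
  classical
  intro d hd
  obtain ⟨e, he, f, hf, rfl⟩ := Finset.mem_add.mp (support_mul _ _ hd)
  have hpe : |bm.2 - Finsupp.weight Prod.snd e| ≤ M := hp he
  have hqf : |n - (Finsupp.weight Prod.snd f + bm.2)| ≤ N := by
    simpa [gradeBand, Finsupp.weight_single] using
      hq (add_single_mem_support_of_mem_support_pderiv hf)
  calc |n - Finsupp.weight Prod.snd (e + f)|
      = |(n - (Finsupp.weight Prod.snd f + bm.2)) + (bm.2 - Finsupp.weight Prod.snd e)| := by
        rw [map_add]; ring_nf
    _ ≤ N + M := (abs_add_le _ _).trans (add_le_add hqf hpe)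
    _ = M + N := add_comm N M

theorem boundedGrade_derAct (hQsupp : ∀ an ∈ A, Q an ∈ supported ℂ A) {M N : ℤ}
    (hP : ∀ an ∈ A, P an ∈ restrictSupport ℂ (gradeBand an.2 M))
    (hQ : ∀ an ∈ A, Q an ∈ restrictSupport ℂ (gradeBand an.2 N)) {an : ι × ℤ} (han : an ∈ A) :
    derAct P Q an ∈ restrictSupport ℂ (gradeBand an.2 (M + N)) :=
  finsum_mul_pderiv_mem (hQsupp an han) fun bm hbm =>
    mul_pderiv_mem_gradeBand (hP bm hbm) (hQ an han)

theorem boundedGrade_derBracket (hPsupp : ∀ an ∈ A, P an ∈ supported ℂ A)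
    (hQsupp : ∀ an ∈ A, Q an ∈ supported ℂ A) (hP : BoundedGrade A P) (hQ : BoundedGrade A Q) :
    BoundedGrade A (derBracket P Q) := by
  obtain ⟨M, hP⟩ := boundedGrade_iff.mp hP
  obtain ⟨N, hQ⟩ := boundedGrade_iff.mp hQ
  refine boundedGrade_iff.mpr ⟨M + N, fun an han => ?_⟩
  rw [derBracket_eq_sub, Pi.sub_apply]
  refine sub_mem (boundedGrade_derAct hQsupp hP hQ han) ?_
  rw [add_comm]
  exact boundedGrade_derAct hPsupp hQ hP han

theorem boundedGrade_add (hP : BoundedGrade A P) (hQ : BoundedGrade A Q) :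
    BoundedGrade A (P + Q) := by
  obtain ⟨M, hP⟩ := boundedGrade_iff.mp hP
  obtain ⟨N, hQ⟩ := boundedGrade_iff.mp hQ
  have hmono : ∀ n {M N : ℤ}, M ≤ N →
      restrictSupport ℂ (gradeBand (ι := ι) n M) ≤ restrictSupport ℂ (gradeBand n N) :=
    fun _ _ _ h => restrictSupport_mono ℂ fun _ hd => le_trans hd h
  exact boundedGrade_iff.mpr ⟨max M N, fun an han =>
    add_mem (hmono _ (le_max_left M N) (hP an han)) (hmono _ (le_max_right M N) (hQ an han))⟩

theorem IsLin.boundedGrade (hP : IsLin A P) : BoundedGrade A P := by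
  obtain ⟨K, -, hK⟩ := isLin_iff.mp hP
  refine boundedGrade_iff.mpr ⟨K, fun an han => ?_⟩
  refine restrictSupport_mono ℂ ?_ (span_X_image_le_restrictSupport (hK an han))
  rintro _ ⟨bm, ⟨-, h₁, h₂⟩, rfl⟩
  simp only [gradeBand, Set.mem_ofPred_eq, Finsupp.weight_single, one_smul, abs_le]
  constructor <;> linarith

theorem Int.eventually_cofinite_forall_mem_Icc {p : ℤ → Prop} (hp : ∀ᶠ m in cofinite, p m)
    (K : ℤ) : ∀ᶠ n in cofinite, ∀ m ∈ Set.Icc (n - K) (n + K), p m := by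
  rw [eventually_cofinite] at hp ⊢
  refine (hp.biUnion fun m _ => Set.finite_Icc (m - K) (m + K)).subset fun n hn => ?_
  simp only [Set.mem_ofPred_eq, not_forall] at hn
  obtain ⟨m, ⟨h₁, h₂⟩, hm⟩ := hn
  exact Set.mem_biUnion hm ⟨by omega, by omega⟩

def levelsBelow (A : Set (ι × ℤ)) (k : ℤ) : Set (ι × ℤ) :=
  {bm | bm ∈ A ∧ bm.2 < k}

theorem levelsBelow_mono {k l : ℤ} (h : k ≤ l) : levelsBelow A k ⊆ levelsBelow A l :=
  fun _ hbm => ⟨hbm.1, hbm.2.trans_le h⟩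

theorem levelWindow_subset_levelsBelow {m K k : ℤ} (h : m + K < k) :
    levelWindow A m K ⊆ levelsBelow A k :=
  fun _ hbm => ⟨hbm.1, hbm.2.2.trans_lt h⟩

theorem wideningGap_iff : WideningGap A P ↔
    ∀ K, 1 ≤ K → ∀ᶠ n in cofinite,
      ∀ a, (a, n) ∈ A → P (a, n) ∈ supported ℂ (levelsBelow A (n - K)) :=
  Iff.rfl

theorem wideningGap_add (hP : WideningGap A P) (hQ : WideningGap A Q) :
    WideningGap A (P + Q) := by
  rw [wideningGap_iff] at *
  intro K hK
  filter_upwards [hP K hK, hQ K hK] with n hPn hQn a ha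
  exact add_mem (hPn a ha) (hQn a ha)

theorem wideningGap_sub (hP : WideningGap A P) (hQ : WideningGap A Q) :
    WideningGap A (P - Q) := by
  rw [wideningGap_iff] at *
  intro K hK
  filter_upwards [hP K hK, hQ K hK] with n hPn hQn a ha
  exact sub_mem (hPn a ha) (hQn a ha)

def PreservesLowLevels (A : Set (ι × ℤ)) (P : ι × ℤ → MvPolynomial (ι × ℤ) ℂ) : Prop :=
  ∀ K, 1 ≤ K → ∃ K' ≥ K, ∀ᶠ n in cofinite,
    ∀ bm ∈ A, bm.2 < n - K' → P bm ∈ supported ℂ (levelsBelow A (n - K))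

theorem IsLin.preservesLowLevels (hP : IsLin A P) : PreservesLowLevels A P := by
  obtain ⟨L, hL, hP⟩ := isLin_iff.mp hP
  refine fun K _ => ⟨K + L, by omega, Eventually.of_forall fun n bm hbm hlt => ?_⟩
  exact supported_mono (levelWindow_subset_levelsBelow (by omega))
    (span_X_image_le_supported (hP bm hbm))

theorem eventually_mem_supported_levelsBelow {p : MvPolynomial (ι × ℤ) ℂ} (hp : p ∈ supported ℂ A)
    (m K : ℤ) : ∀ᶠ n in cofinite, m < n - K → p ∈ supported ℂ (levelsBelow A (n - K)) := by
  rw [eventually_cofinite]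
  refine (p.vars.finite_toSet.biUnion fun cl _ => Set.finite_Ioc (m + K) (cl.2 + K)).subset
    fun n hn => ?_
  simp only [Set.mem_ofPred_eq, Classical.not_imp] at hn
  obtain ⟨hmn, hn⟩ := hn
  obtain ⟨cl, hcl, hlow⟩ := Set.not_subset.mp (mt mem_supported.mpr hn)
  have hcl' : n - K ≤ cl.2 := not_lt.mp fun h => hlow ⟨mem_supported.mp hp hcl, h⟩
  exact Set.mem_biUnion hcl ⟨by omega, by omega⟩

theorem WideningGap.preservesLowLevels [Finite ι] (hPsupp : ∀ an ∈ A, P an ∈ supported ℂ A)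
    (hP : WideningGap A P) : PreservesLowLevels A P := by
  intro K hK
  refine ⟨K, le_rfl, ?_⟩
  set B := {m : ℤ | ¬ ∀ a, (a, m) ∈ A → P (a, m) ∈ supported ℂ (levelsBelow A (m - K))}
  have hB : ((Set.univ ×ˢ B) ∩ A).Finite := ((Set.finite_univ).prod (hP K hK)).inter_of_left A
  filter_upwards [hB.eventually_all.mpr fun bm hbm => eventually_mem_supported_levelsBelow
    (hPsupp bm hbm.2) bm.2 K] with n hn bm hbm hlt
  by_cases hm : bm.2 ∈ B
  · exact hn bm ⟨⟨trivial, hm⟩, hbm⟩ hlt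
  · exact supported_mono (levelsBelow_mono (by omega)) (not_not.mp hm bm.1 hbm)

theorem wideningGap_derAct (hP : PreservesLowLevels A P) (hQ : WideningGap A Q) :
    WideningGap A (derAct P Q) := by
  rw [wideningGap_iff] at *
  intro K hK
  obtain ⟨K', hKK', hP⟩ := hP K hK
  filter_upwards [hP, hQ K' (hK.trans hKK')] with n hPn hQn a ha
  exact finsum_mul_pderiv_mem (hQn a ha) fun bm hbm =>
    mul_mem (hPn bm hbm.1 hbm.2)
      (supported_mono (levelsBelow_mono (by omega)) (pderiv_mem_supported (hQn a ha) bm))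

theorem wideningGap_derAct_of_isLin (hP : WideningGap A P) (hQ : IsLin A Q) :
    WideningGap A (derAct P Q) := by
  obtain ⟨L, hL, hQ⟩ := isLin_iff.mp hQ
  rw [wideningGap_iff] at *
  intro K hK
  filter_upwards [Int.eventually_cofinite_forall_mem_Icc (hP (K + L) (by omega)) L]
    with n hn a ha
  refine finsum_mul_pderiv_mem (span_X_image_le_supported (hQ _ ha)) fun bm hbm =>
    mul_pderiv_mem_of_mem_span_X_image (hQ _ ha) ?_
  exact supported_mono (levelsBelow_mono (by linarith [hbm.2.2])) (hn bm.2 hbm.2 bm.1 hbm.1)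

theorem IsDw.add (hP : IsDw A P) (hQ : IsDw A Q) : IsDw A (P + Q) :=
  ⟨boundedGrade_add hP.1 hQ.1, wideningGap_add hP.2 hQ.2⟩

theorem isDw_derBracket [Finite ι] (hPsupp : ∀ an ∈ A, P an ∈ supported ℂ A)
    (hQsupp : ∀ an ∈ A, Q an ∈ supported ℂ A) (hP : IsDw A P) (hQ : IsDw A Q) :
    IsDw A (derBracket P Q) := by
  refine ⟨boundedGrade_derBracket hPsupp hQsupp hP.1 hQ.1, ?_⟩
  rw [derBracket_eq_sub]
  exact wideningGap_sub (wideningGap_derAct (hP.2.preservesLowLevels hPsupp) hQ.2)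
    (wideningGap_derAct (hQ.2.preservesLowLevels hQsupp) hP.2)

theorem isDw_derBracket_of_isLin_left (hQsupp : ∀ an ∈ A, Q an ∈ supported ℂ A)
    (hP : IsLin A P) (hQ : IsDw A Q) : IsDw A (derBracket P Q) := by
  refine ⟨boundedGrade_derBracket hP.mem_supported hQsupp hP.boundedGrade hQ.1, ?_⟩
  rw [derBracket_eq_sub]
  exact wideningGap_sub (wideningGap_derAct hP.preservesLowLevels hQ.2)
    (wideningGap_derAct_of_isLin hQ.2 hP)

theorem isDw_derBracket_of_isLin_right (hPsupp : ∀ an ∈ A, P an ∈ supported ℂ A)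
    (hP : IsDw A P) (hQ : IsLin A Q) : IsDw A (derBracket P Q) := by
  refine ⟨boundedGrade_derBracket hPsupp hQ.mem_supported hP.1 hQ.boundedGrade, ?_⟩
  rw [derBracket_eq_sub]
  exact wideningGap_sub (wideningGap_derAct_of_isLin hP.2 hQ)
    (wideningGap_derAct hQ.preservesLowLevels hP.2)

end Fields

theorem stmt17_general [Fintype ι] (A : Set (ι × ℤ))
    (P Q : ι × ℤ → MvPolynomial (ι × ℤ) ℂ)
    (hPsupp : ∀ an, P an ∈ MvPolynomial.supported ℂ A)
    (hQsupp : ∀ an, Q an ∈ MvPolynomial.supported ℂ A) :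
    (IsLin A P → IsLin A Q → IsLin A (derBracket P Q)) ∧
    (IsLin A P → IsDw A Q → IsDw A (derBracket P Q)) ∧
    (IsDw A P → IsLin A Q → IsDw A (derBracket P Q)) ∧
    (IsDw A P → IsDw A Q → IsDw A (derBracket P Q)) ∧
    (∀ P₁ P₂ Q₁ Q₂ : ι × ℤ → MvPolynomial (ι × ℤ) ℂ,
      P = P₁ + P₂ → Q = Q₁ + Q₂ →
      IsDw A P₁ → IsLin A P₂ → IsDw A Q₁ → IsLin A Q₂ →
      ∃ R₁ R₂ : ι × ℤ → MvPolynomial (ι × ℤ) ℂ,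
        derBracket P Q = R₁ + R₂ ∧ IsDw A R₁ ∧ IsLin A R₂) := by
  have hPsupp' : ∀ an ∈ A, P an ∈ supported ℂ A := fun an _ => hPsupp an
  have hQsupp' : ∀ an ∈ A, Q an ∈ supported ℂ A := fun an _ => hQsupp an
  refine ⟨isLin_derBracket, isDw_derBracket_of_isLin_left hQsupp',
    isDw_derBracket_of_isLin_right hPsupp', isDw_derBracket hPsupp' hQsupp', ?_⟩
  rintro P₁ P₂ Q₁ Q₂ rfl rfl hP₁ hP₂ hQ₁ hQ₂
  have hP₁supp : ∀ an ∈ A, P₁ an ∈ supported ℂ A := fun an han => by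
    simpa using sub_mem (hPsupp an) (hP₂.mem_supported an han)
  have hQ₁supp : ∀ an ∈ A, Q₁ an ∈ supported ℂ A := fun an han => by
    simpa using sub_mem (hQsupp an) (hQ₂.mem_supported an han)
  refine ⟨derBracket P₁ Q₁ + derBracket P₁ Q₂ + derBracket P₂ Q₁, derBracket P₂ Q₂, ?_,
    ((isDw_derBracket hP₁supp hQ₁supp hP₁ hQ₁).add
      (isDw_derBracket_of_isLin_right hP₁supp hP₁ hQ₂)).add
      (isDw_derBracket_of_isLin_left hQ₁supp hP₂ hQ₁),
    isLin_derBracket hP₂ hQ₂⟩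
  simp only [derBracket_add_left, derBracket_add_right]
  abel

/-- `Dw ⋊ Dℓ` is a Lie subalgebra of `D̃er 𝒪₊`:
`[Dℓ, Dℓ] ⊆ Dℓ`, `[Dℓ, Dw] ⊆ Dw`, `[Dw, Dℓ] ⊆ Dw` and `[Dw, Dw] ⊆ Dw`,
so `Dw + Dℓ` is closed under the bracket. -/
theorem stmt17 [Fintype ι] (A : Set (ι × ℤ))
    (hA : ∀ a : ι, ∀ n : ℤ, 1 ≤ n → (a, n) ∈ A)
    (P Q : ι × ℤ → MvPolynomial (ι × ℤ) ℂ)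
    (hP0 : ∀ an ∉ A, P an = 0) (hPsupp : ∀ an, P an ∈ MvPolynomial.supported ℂ A)
    (hQ0 : ∀ an ∉ A, Q an = 0) (hQsupp : ∀ an, Q an ∈ MvPolynomial.supported ℂ A) :
    (IsLin A P → IsLin A Q → IsLin A (derBracket P Q)) ∧
    (IsLin A P → IsDw A Q → IsDw A (derBracket P Q)) ∧
    (IsDw A P → IsLin A Q → IsDw A (derBracket P Q)) ∧
    (IsDw A P → IsDw A Q → IsDw A (derBracket P Q)) ∧
    (∀ P₁ P₂ Q₁ Q₂ : ι × ℤ → MvPolynomial (ι × ℤ) ℂ,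
      P = P₁ + P₂ → Q = Q₁ + Q₂ →
      IsDw A P₁ → IsLin A P₂ → IsDw A Q₁ → IsLin A Q₂ →
      ∃ R₁ R₂ : ι × ℤ → MvPolynomial (ι × ℤ) ℂ,
        derBracket P Q = R₁ + R₂ ∧ IsDw A R₁ ∧ IsLin A R₂) :=
  stmt17_general A P Q hPsupp hQsupp
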